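/- arXiv:0905.0599 — 4 statements merged into one kernel-verified Lean document; each statement's English description precedes it below -/
import Mathlib

section
/- Let d2, d3 be integers with 3 ≤ d2 ≤ d3. If 3 divides d2, or if d3 = 3a + b·d2 for some natural numbers a, b, then there exists a tame automorphism F of ℂ³ with multidegree mdeg F = (3, d2, d3). -/
open MvPolynomial

/-- The multidegree of a polynomial automorphism of `ℂⁿ`: the sequence of total degrees of the
images of the variables. -/
noncomputable def polyMdeg {n : ℕ} (F : MvPolynomial (Fin n) ℂ ≃ₐ[ℂ] MvPolynomial (Fin n) ℂ) :
    Fin n → ℕ := fun i => (F (X i)).totalDegree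

/-- An automorphism is affine (linear) if it maps each variable to a polynomial of degree ≤ 1. -/
def IsAffineAut {n : ℕ} (F : MvPolynomial (Fin n) ℂ ≃ₐ[ℂ] MvPolynomial (Fin n) ℂ) : Prop :=
  ∀ i, (F (X i)).totalDegree ≤ 1

/-- An automorphism is elementary (triangular) if it sends one variable `xᵢ` to `xᵢ + p`, where
`p` is a polynomial in the other variables, and fixes all other variables. -/
def IsElementaryAut {n : ℕ} (F : MvPolynomial (Fin n) ℂ ≃ₐ[ℂ] MvPolynomial (Fin n) ℂ) : Prop :=
  ∃ (i : Fin n) (p : MvPolynomial (Fin n) ℂ), degreeOf i p = 0 ∧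
    F (X i) = X i + p ∧ ∀ j, j ≠ i → F (X j) = X j

/-- A tame automorphism is a composition of affine and elementary automorphisms, i.e. an element
of the subgroup generated by these. -/
def IsTameAut {n : ℕ} (F : MvPolynomial (Fin n) ℂ ≃ₐ[ℂ] MvPolynomial (Fin n) ℂ) : Prop :=
  F ∈ Subgroup.closure {G : MvPolynomial (Fin n) ℂ ≃ₐ[ℂ] MvPolynomial (Fin n) ℂ |
    IsAffineAut G ∨ IsElementaryAut G}

/-! Both cases are realised by explicit products of elementary automorphisms, written here in
coordinates `(x, y, z)`. If `d₂ = 3k`, write `d₃ = 3α + 2β` (possible as `d₃ ≥ 2`) and take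
`(x + z³, y + x² + (x + z³)ᵏ, z + (x + z³)^α (y + x²)^β)`; if `d₃ = 3a + b d₂`, take
`(x + y³, y + z^d₂, z + (x + y³)^a (y + z^d₂)^b)`. Over a domain the total degree is additive on
products, and each component is a product of such binomials plus terms of lower degree, so its
degree can be read off. -/

namespace MvPolynomial

variable {σ R : Type*} [CommRing R]

section Vars

variable [Nontrivial R] {i j l : σ}

lemma notMem_vars_X_pow (hj : j ≠ i) (m : ℕ) : i ∉ (X j ^ m : MvPolynomial σ R).vars :=
  fun h => hj (by simpa using vars_pow _ _ h : i = j).symm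

lemma notMem_vars_X_pow_mul_X_pow [DecidableEq σ] (hj : j ≠ i) (hl : l ≠ i) (m n : ℕ) :
    i ∉ (X j ^ m * X l ^ n : MvPolynomial σ R).vars := fun h => by
  rcases Finset.mem_union.mp (vars_mul _ _ h) with h | h
  exacts [notMem_vars_X_pow hj m h, notMem_vars_X_pow hl n h]

end Vars

section Elementary

variable [DecidableEq σ]

lemma aeval_update_X_of_notMem_vars {i : σ} {p : MvPolynomial σ R} (hp : i ∉ p.vars)
    (q : MvPolynomial σ R) : aeval (Function.update X i q) p = p := by
  conv_rhs => rw [← aeval_X_left_apply p]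
  refine hom_congr_vars (f₁ := (aeval (Function.update X i q)).toRingHom)
    (f₂ := (aeval X).toRingHom) (by ext; simp) (fun j hj _ => ?_) rfl
  simp [Function.update_of_ne (ne_of_mem_of_not_mem hj hp)]

noncomputable def elementaryAut (i : σ) (p : MvPolynomial σ R) (hp : i ∉ p.vars) :
    MvPolynomial σ R ≃ₐ[R] MvPolynomial σ R :=
  AlgEquiv.ofAlgHom (aeval (Function.update X i (X i + p)))
    (aeval (Function.update X i (X i - p)))
    (algHom_ext fun j => by
      rcases eq_or_ne j i with rfl | hj
      · simp only [AlgHom.comp_apply, aeval_X, Function.update_self, map_sub,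
          aeval_update_X_of_notMem_vars hp, AlgHom.id_apply, add_sub_cancel_right]
      · simp [hj])
    (algHom_ext fun j => by
      rcases eq_or_ne j i with rfl | hj
      · simp only [AlgHom.comp_apply, aeval_X, Function.update_self, map_add,
          aeval_update_X_of_notMem_vars hp, AlgHom.id_apply, sub_add_cancel]
      · simp [hj])

@[simp]
lemma elementaryAut_X_self (i : σ) (p : MvPolynomial σ R) (hp : i ∉ p.vars) :
    elementaryAut i p hp (X i) = X i + p := by
  simp [elementaryAut]

@[simp]
lemma elementaryAut_X_of_ne {i j : σ} (p : MvPolynomial σ R) (hp : i ∉ p.vars) (hj : j ≠ i) :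
    elementaryAut i p hp (X j) = X j := by
  simp [elementaryAut, hj]

end Elementary

section Degree

variable [IsDomain R]

lemma totalDegree_pow_of_isDomain (p : MvPolynomial σ R) (n : ℕ) :
    (p ^ n).totalDegree = n * p.totalDegree := by
  rcases eq_or_ne p 0 with rfl | hp
  · cases n <;> simp
  induction n with
  | zero => simp
  | succ n ih =>
    rw [pow_succ, totalDegree_mul_of_isDomain (pow_ne_zero n hp) hp, ih, Nat.succ_mul]

lemma totalDegree_X_add_X_pow (i j : σ) {n : ℕ} (hn : 2 ≤ n) :
    (X i + X j ^ n : MvPolynomial σ R).totalDegree = n := by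
  rw [totalDegree_add_eq_right_of_totalDegree_lt, totalDegree_X_pow]
  rw [totalDegree_X, totalDegree_X_pow]
  omega

lemma X_add_X_pow_ne_zero (i j : σ) {n : ℕ} (hn : 2 ≤ n) :
    (X i + X j ^ n : MvPolynomial σ R) ≠ 0 := fun h => by
  have := totalDegree_X_add_X_pow (R := R) i j hn
  rw [h, totalDegree_zero] at this
  omega

lemma totalDegree_X_add_X_pow_pow (i j : σ) {n : ℕ} (hn : 2 ≤ n) (a : ℕ) :
    ((X i + X j ^ n : MvPolynomial σ R) ^ a).totalDegree = a * n := by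
  rw [totalDegree_pow_of_isDomain, totalDegree_X_add_X_pow i j hn]

lemma totalDegree_X_add_X_pow_pow_mul {i j k l : σ} {m n : ℕ} (hm : 2 ≤ m) (hn : 2 ≤ n)
    (a b : ℕ) :
    ((X i + X j ^ m : MvPolynomial σ R) ^ a * (X k + X l ^ n) ^ b).totalDegree =
      a * m + b * n := by
  rw [totalDegree_mul_of_isDomain (pow_ne_zero _ (X_add_X_pow_ne_zero i j hm))
    (pow_ne_zero _ (X_add_X_pow_ne_zero k l hn)), totalDegree_X_add_X_pow_pow i j hm,
    totalDegree_X_add_X_pow_pow k l hn]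

end Degree

end MvPolynomial

open MvPolynomial

lemma IsTameAut.mul {n : ℕ} {F G : MvPolynomial (Fin n) ℂ ≃ₐ[ℂ] MvPolynomial (Fin n) ℂ}
    (hF : IsTameAut F) (hG : IsTameAut G) : IsTameAut (F * G) :=
  Subgroup.mul_mem _ hF hG

lemma isTameAut_elementaryAut {n : ℕ} (i : Fin n) (p : MvPolynomial (Fin n) ℂ)
    (hp : i ∉ p.vars) : IsTameAut (elementaryAut i p hp) :=
  Subgroup.subset_closure <| Or.inr
    ⟨i, p, by rwa [mem_vars_iff_degreeOf_ne_zero, not_not] at hp, elementaryAut_X_self i p hp,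
      fun _ hj => elementaryAut_X_of_ne p hp hj⟩

noncomputable def autOfDvd (k α β : ℕ) : MvPolynomial (Fin 3) ℂ ≃ₐ[ℂ] MvPolynomial (Fin 3) ℂ :=
  elementaryAut 1 (X 0 ^ 2) (notMem_vars_X_pow (by decide) _) *
    elementaryAut 0 (X 2 ^ 3) (notMem_vars_X_pow (by decide) _) *
    elementaryAut 2 (X 0 ^ α * X 1 ^ β)
      (notMem_vars_X_pow_mul_X_pow (by decide) (by decide) _ _) *
    elementaryAut 1 (X 0 ^ k) (notMem_vars_X_pow (by decide) _)

noncomputable def autOfMem (d a b : ℕ) : MvPolynomial (Fin 3) ℂ ≃ₐ[ℂ] MvPolynomial (Fin 3) ℂ :=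
  elementaryAut 0 (X 1 ^ 3) (notMem_vars_X_pow (by decide) _) *
    elementaryAut 1 (X 2 ^ d) (notMem_vars_X_pow (by decide) _) *
    elementaryAut 2 (X 0 ^ a * X 1 ^ b)
      (notMem_vars_X_pow_mul_X_pow (by decide) (by decide) _ _)

lemma isTameAut_autOfDvd (k α β : ℕ) : IsTameAut (autOfDvd k α β) :=
  (((isTameAut_elementaryAut _ _ _).mul (isTameAut_elementaryAut _ _ _)).mul
    (isTameAut_elementaryAut _ _ _)).mul (isTameAut_elementaryAut _ _ _)

lemma isTameAut_autOfMem (d a b : ℕ) : IsTameAut (autOfMem d a b) :=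
  ((isTameAut_elementaryAut _ _ _).mul (isTameAut_elementaryAut _ _ _)).mul
    (isTameAut_elementaryAut _ _ _)

lemma autOfDvd_X_zero (k α β : ℕ) : autOfDvd k α β (X 0) = X 0 + X 2 ^ 3 := by
  simp only [autOfDvd, AlgEquiv.mul_apply]
  simp

lemma autOfDvd_X_one (k α β : ℕ) :
    autOfDvd k α β (X 1) = X 1 + X 0 ^ 2 + (X 0 + X 2 ^ 3) ^ k := by
  simp only [autOfDvd, AlgEquiv.mul_apply]
  simp

lemma autOfDvd_X_two (k α β : ℕ) :
    autOfDvd k α β (X 2) = X 2 + (X 0 + X 2 ^ 3) ^ α * (X 1 + X 0 ^ 2) ^ β := by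
  simp only [autOfDvd, AlgEquiv.mul_apply]
  simp

lemma autOfMem_X_zero (d a b : ℕ) : autOfMem d a b (X 0) = X 0 + X 1 ^ 3 := by
  simp only [autOfMem, AlgEquiv.mul_apply]
  simp

lemma autOfMem_X_one (d a b : ℕ) : autOfMem d a b (X 1) = X 1 + X 2 ^ d := by
  simp only [autOfMem, AlgEquiv.mul_apply]
  simp

lemma autOfMem_X_two (d a b : ℕ) :
    autOfMem d a b (X 2) = X 2 + (X 0 + X 1 ^ 3) ^ a * (X 1 + X 2 ^ d) ^ b := by
  simp only [autOfMem, AlgEquiv.mul_apply]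
  simp

lemma polyMdeg_eq_three {F : MvPolynomial (Fin 3) ℂ ≃ₐ[ℂ] MvPolynomial (Fin 3) ℂ} {d₀ d₁ d₂ : ℕ}
    (h₀ : (F (X 0)).totalDegree = d₀) (h₁ : (F (X 1)).totalDegree = d₁)
    (h₂ : (F (X 2)).totalDegree = d₂) : polyMdeg F = ![d₀, d₁, d₂] := by
  funext i
  fin_cases i <;> assumption

lemma polyMdeg_autOfDvd {k α β : ℕ} (hk : 1 ≤ k) (hαβ : 2 ≤ 3 * α + 2 * β) :
    polyMdeg (autOfDvd k α β) = ![3, 3 * k, 3 * α + 2 * β] := by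
  refine polyMdeg_eq_three ?_ ?_ ?_
  · rw [autOfDvd_X_zero, totalDegree_X_add_X_pow _ _ (by norm_num)]
  · rw [autOfDvd_X_one, totalDegree_add_eq_right_of_totalDegree_lt,
      totalDegree_X_add_X_pow_pow _ _ (by norm_num)]
    · ring
    · rw [totalDegree_X_add_X_pow _ _ le_rfl, totalDegree_X_add_X_pow_pow _ _ (by norm_num)]
      omega
  · rw [autOfDvd_X_two, totalDegree_add_eq_right_of_totalDegree_lt,
      totalDegree_X_add_X_pow_pow_mul (by norm_num) le_rfl]
    · ring
    · rw [totalDegree_X_add_X_pow_pow_mul (by norm_num) le_rfl, totalDegree_X]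
      omega

lemma polyMdeg_autOfMem {d a b : ℕ} (hd : 2 ≤ d) (hab : 2 ≤ 3 * a + b * d) :
    polyMdeg (autOfMem d a b) = ![3, d, 3 * a + b * d] := by
  refine polyMdeg_eq_three ?_ ?_ ?_
  · rw [autOfMem_X_zero, totalDegree_X_add_X_pow _ _ (by norm_num)]
  · rw [autOfMem_X_one, totalDegree_X_add_X_pow _ _ hd]
  · rw [autOfMem_X_two, totalDegree_add_eq_right_of_totalDegree_lt,
      totalDegree_X_add_X_pow_pow_mul (by norm_num) hd]
    · ring
    · rw [totalDegree_X_add_X_pow_pow_mul (by norm_num) hd, totalDegree_X]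
      omega

lemma exists_eq_three_mul_add_two_mul {n : ℕ} (hn : 2 ≤ n) : ∃ α β : ℕ, n = 3 * α + 2 * β := by
  rcases Nat.even_or_odd n with ⟨m, hm⟩ | ⟨m, hm⟩
  · exact ⟨0, m, by omega⟩
  · exact ⟨1, m - 1, by omega⟩

/-- If `3 ≤ d2 ≤ d3` and `3 ∣ d2` or `d3 = 3a + b·d2` for some naturals `a, b`, then there is a
tame automorphism of `ℂ³` with multidegree `(3, d2, d3)`. -/
theorem exists_tame_of_dvd_or_mem (d2 d3 : ℕ) (h2 : 3 ≤ d2) (h23 : d2 ≤ d3)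
    (h : 3 ∣ d2 ∨ ∃ a b : ℕ, d3 = 3 * a + b * d2) :
    ∃ F : MvPolynomial (Fin 3) ℂ ≃ₐ[ℂ] MvPolynomial (Fin 3) ℂ,
      IsTameAut F ∧ polyMdeg F = ![3, d2, d3] := by
  rcases h with ⟨k, rfl⟩ | ⟨a, b, rfl⟩
  · obtain ⟨α, β, rfl⟩ := exists_eq_three_mul_add_two_mul (by omega : 2 ≤ d3)
    exact ⟨autOfDvd k α β, isTameAut_autOfDvd k α β, polyMdeg_autOfDvd (by omega) (by omega)⟩
  · exact ⟨autOfMem d2 a b, isTameAut_autOfMem d2 a b, polyMdeg_autOfMem (by omega) (by omega)⟩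
end

section
/- Let f, g ∈ ℂ[x₁,…,xₙ] be polynomials whose highest homogeneous parts f̄ and ḡ are algebraically independent over ℂ, and let G(x,y) ∈ ℂ[x,y] be a nonzero polynomial. Then deg G(f,g) ≥ (deg_y G) · deg g, where deg denotes total degree and deg_y G is the degree of G in the variable y. -/
/-!
Give `x` the weight `deg f` and `y` the weight `deg g`, and let `m` be the weighted degree of `G`.
The degree-`m` homogeneous component of `G(f, g)` only sees the top homogeneous parts of `f` and
`g`: it equals `G_m(f̄, ḡ)`, where `G_m ≠ 0` is the weight-`m` part of `G`. Algebraic independence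
of `f̄, ḡ` makes this nonzero, so `deg G(f, g) ≥ m ≥ (deg_y G) · deg g`.
-/

open MvPolynomial

/-- The highest homogeneous part of a multivariate polynomial: the sum of all monomials of
maximal total degree. -/
noncomputable def topHomPart {n : ℕ} (f : MvPolynomial (Fin n) ℂ) : MvPolynomial (Fin n) ℂ :=
  homogeneousComponent f.totalDegree f

namespace MvPolynomial

variable {σ τ R : Type*} [CommSemiring R]

theorem homogeneousComponent_mul_of_totalDegree_le {p q : MvPolynomial τ R} {a b : ℕ}
    (hp : p.totalDegree ≤ a) (hq : q.totalDegree ≤ b) :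
    homogeneousComponent (a + b) (p * q) = homogeneousComponent a p * homogeneousComponent b q := by
  classical
  ext m
  rw [coeff_homogeneousComponent]
  split_ifs with hm
  · rw [coeff_mul, coeff_mul]
    refine Finset.sum_congr rfl fun x hx => ?_
    rw [Finset.HasAntidiagonal.mem_antidiagonal] at hx
    rw [coeff_homogeneousComponent, coeff_homogeneousComponent]
    by_cases hx1 : coeff x.1 p = 0
    · simp [hx1]
    by_cases hx2 : coeff x.2 q = 0
    · simp [hx2]
    have h1 : x.1.degree ≤ a := (le_totalDegree (mem_support_iff.2 hx1)).trans hp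
    have h2 : x.2.degree ≤ b := (le_totalDegree (mem_support_iff.2 hx2)).trans hq
    have hsum : x.1.degree + x.2.degree = a + b := by rw [← map_add, hx, hm]
    rw [if_pos (by omega), if_pos (by omega)]
  · exact (((homogeneousComponent_isHomogeneous a p).mul
      (homogeneousComponent_isHomogeneous b q)).coeff_eq_zero hm).symm

theorem homogeneousComponent_pow_of_totalDegree_le {p : MvPolynomial τ R} {a : ℕ}
    (hp : p.totalDegree ≤ a) (k : ℕ) :
    homogeneousComponent (k * a) (p ^ k) = homogeneousComponent a p ^ k := by
  induction k with
  | zero => simp [homogeneousComponent_zero]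
  | succ k ih =>
    rw [add_mul, one_mul, pow_succ, pow_succ, ← ih,
      homogeneousComponent_mul_of_totalDegree_le ((totalDegree_pow p k).trans
        (Nat.mul_le_mul_left k hp)) hp]

theorem homogeneousComponent_prod_of_totalDegree_le {ι : Type*} (s : Finset ι)
    {p : ι → MvPolynomial τ R} {a : ι → ℕ} (hp : ∀ i ∈ s, (p i).totalDegree ≤ a i) :
    homogeneousComponent (∑ i ∈ s, a i) (∏ i ∈ s, p i) =
      ∏ i ∈ s, homogeneousComponent (a i) (p i) := by
  classical
  induction s using Finset.induction_on with
  | empty => simp [homogeneousComponent_zero]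
  | insert j s hj ih =>
    rw [Finset.forall_mem_insert] at hp
    rw [Finset.sum_insert hj, Finset.prod_insert hj, Finset.prod_insert hj, ← ih hp.2,
      homogeneousComponent_mul_of_totalDegree_le hp.1
        ((totalDegree_finsetProd s p).trans (Finset.sum_le_sum hp.2))]

theorem totalDegree_aeval_monomial_le {φ : σ → MvPolynomial τ R} {w : σ → ℕ}
    (hφ : ∀ i, (φ i).totalDegree ≤ w i) (u : σ →₀ ℕ) (c : R) :
    (aeval φ (monomial u c)).totalDegree ≤ Finsupp.weight w u := by
  rw [aeval_monomial, algebraMap_eq, ← smul_eq_C_mul, Finsupp.weight_apply]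
  exact (totalDegree_smul_le _ _).trans <| (totalDegree_finsetProd _ _).trans <|
    Finset.sum_le_sum fun i _ => (totalDegree_pow _ _).trans (Nat.mul_le_mul_left _ (hφ i))

theorem homogeneousComponent_weight_aeval_monomial {φ : σ → MvPolynomial τ R} {w : σ → ℕ}
    (hφ : ∀ i, (φ i).totalDegree ≤ w i) (u : σ →₀ ℕ) (c : R) :
    homogeneousComponent (Finsupp.weight w u) (aeval φ (monomial u c)) =
      aeval (fun i => homogeneousComponent (w i) (φ i)) (monomial u c) := by
  simp only [aeval_monomial, algebraMap_eq, homogeneousComponent_C_mul, Finsupp.weight_apply,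
    Finsupp.prod, Finsupp.sum, smul_eq_mul]
  rw [homogeneousComponent_prod_of_totalDegree_le _ fun i _ =>
    (totalDegree_pow _ _).trans (Nat.mul_le_mul_left _ (hφ i))]
  simp_rw [homogeneousComponent_pow_of_totalDegree_le (hφ _)]

theorem homogeneousComponent_aeval_of_weightedTotalDegree_le {φ : σ → MvPolynomial τ R}
    {w : σ → ℕ} (hφ : ∀ i, (φ i).totalDegree ≤ w i) {G : MvPolynomial σ R} {m : ℕ}
    (hG : weightedTotalDegree w G ≤ m) :
    homogeneousComponent m (aeval φ G) =
      aeval (fun i => homogeneousComponent (w i) (φ i)) (weightedHomogeneousComponent w m G) := by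
  classical
  conv_lhs => rw [G.as_sum]
  rw [weightedHomogeneousComponent_apply, map_sum, map_sum, map_sum, Finset.sum_filter]
  refine Finset.sum_congr rfl fun u hu => ?_
  split_ifs with hum
  · rw [← hum, homogeneousComponent_weight_aeval_monomial hφ]
  · exact homogeneousComponent_eq_zero _ _ ((totalDegree_aeval_monomial_le hφ u _).trans_lt
      (((le_weightedTotalDegree w hu).trans hG).lt_of_ne hum))

theorem weightedHomogeneousComponent_weightedTotalDegree_ne_zero {M : Type*}
    [AddCommMonoid M] [LinearOrder M] [OrderBot M] (w : σ → M) {G : MvPolynomial σ R}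
    (hG : G ≠ 0) : weightedHomogeneousComponent w (weightedTotalDegree w G) G ≠ 0 := by
  classical
  obtain ⟨u, hu, hmax⟩ := G.support.exists_mem_eq_sup (support_nonempty.2 hG) (Finsupp.weight w)
  intro h
  have hcoeff := congr_arg (coeff u) h
  rw [coeff_weightedHomogeneousComponent, weightedTotalDegree, if_pos hmax.symm, coeff_zero]
    at hcoeff
  exact mem_support_iff.1 hu hcoeff

theorem degreeOf_mul_le_weightedTotalDegree (w : σ → ℕ) (i : σ) (G : MvPolynomial σ R) :
    degreeOf i G * w i ≤ weightedTotalDegree w G := by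
  classical
  rcases eq_or_ne G 0 with rfl | hG
  · simp
  obtain ⟨u, hu, hdeg⟩ := G.support.exists_mem_eq_sup (support_nonempty.2 hG) fun u => u i
  rw [degreeOf_eq_sup, hdeg]
  refine le_trans ?_ (le_weightedTotalDegree w hu)
  rw [Finsupp.weight_apply, Finsupp.sum]
  by_cases hi : u i = 0
  · simp [hi]
  · exact Finset.single_le_sum (f := fun j => u j • w j) (fun _ _ => Nat.zero_le _)
      (Finsupp.mem_support_iff.2 hi)

end MvPolynomial

/-- If the highest homogeneous parts of `f, g ∈ ℂ[x₁,…,xₙ]` are algebraically independent and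
`G ∈ ℂ[x,y]` is nonzero, then `deg G(f,g) ≥ (deg_y G) · deg g`. -/
theorem totalDegree_comp_ge_degY_mul (n : ℕ) (f g : MvPolynomial (Fin n) ℂ)
    (hind : AlgebraicIndependent ℂ ![topHomPart f, topHomPart g])
    (G : MvPolynomial (Fin 2) ℂ) (hG : G ≠ 0) :
    degreeOf 1 G * g.totalDegree ≤ (aeval ![f, g] G).totalDegree := by
  set w : Fin 2 → ℕ := fun i => (![f, g] i).totalDegree
  set m := weightedTotalDegree w G
  have htop : (fun i => homogeneousComponent (w i) (![f, g] i)) =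
      ![topHomPart f, topHomPart g] := by
    funext i
    fin_cases i <;> rfl
  have hcomp : homogeneousComponent m (aeval ![f, g] G) ≠ 0 := by
    rw [homogeneousComponent_aeval_of_weightedTotalDegree_le (fun _ => le_rfl) le_rfl, htop,
      ← map_zero (aeval (R := ℂ) ![topHomPart f, topHomPart g]),
      (algebraicIndependent_iff_injective_aeval.1 hind).ne_iff]
    exact weightedHomogeneousComponent_weightedTotalDegree_ne_zero w hG
  calc degreeOf 1 G * g.totalDegree = degreeOf 1 G * w 1 := rfl
    _ ≤ m := degreeOf_mul_le_weightedTotalDegree w 1 G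
    _ ≤ (aeval ![f, g] G).totalDegree :=
      not_lt.1 (mt (homogeneousComponent_eq_zero m _) hcomp)
end

section
/- Let d2, d3 be integers with 3 ≤ d2 ≤ d3 such that 3 does not divide d2 and d3 cannot be written as 3a + b·d2 with natural numbers a, b. Then there do not exist a permutation (e₁,e₂,e₃) of (3,d2,d3) and a positive integer n with e₁ = 2n, e₂ = n·s for some odd integer s ≥ 3, and 2n < e₃ ≤ n·s. -/
/-!
The degree 3 must occur somewhere in the pattern `(2n, ns, e₃)`. It cannot be `2n`, which is even;
so `2n ≥ 4`, and then `ns ≥ 6` and `e₃ > 2n ≥ 4` leave no room for it either.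
-/

lemma four_le_of_typeI_pattern {e : Fin 3 → ℕ} {n s : ℕ} (h0 : e 0 = 2 * n) (h1 : e 1 = n * s)
    (hs : 3 ≤ s) (h2 : 2 * n < e 2) (h3 : 3 ≤ e 0) (i : Fin 3) : 4 ≤ e i := by
  have hn : 2 ≤ n := by omega
  have hns : 2 * 3 ≤ n * s := Nat.mul_le_mul hn hs
  fin_cases i <;> simp only [Fin.zero_eta, Fin.mk_one, Fin.reduceFinMk] <;> omega

theorem no_type_I_pattern_general (d2 d3 : ℕ) (h2 : 3 ≤ d2) (h23 : d2 ≤ d3) :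
    ¬ ∃ (e : Fin 3 → ℕ) (σ : Equiv.Perm (Fin 3)) (n s : ℕ),
      e = ![3, d2, d3] ∘ σ ∧ 0 < n ∧ e 0 = 2 * n ∧ e 1 = n * s ∧ Odd s ∧ 3 ≤ s ∧
        2 * n < e 2 ∧ e 2 ≤ n * s := by
  rintro ⟨e, σ, n, s, rfl, -, h0, h1, -, hs, hlt, -⟩
  have three_le : ∀ i, 3 ≤ (![3, d2, d3] : Fin 3 → ℕ) i := by
    intro i; fin_cases i <;> simp <;> omega
  have h4 := four_le_of_typeI_pattern h0 h1 hs hlt (three_le _) (σ.symm 0)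
  simp at h4

/-- Suppose `3 ≤ d2 ≤ d3`, `3 ∤ d2` and `d3 ∉ 3ℕ + d2ℕ`. Then no permutation `(e₁, e₂, e₃)` of
`(3, d2, d3)` fits the degree pattern of a Shestakov–Umirbaev reduction of type I:
`e₁ = 2n`, `e₂ = n·s` with `s ≥ 3` odd, and `2n < e₃ ≤ n·s`. -/
theorem no_type_I_pattern (d2 d3 : ℕ) (h2 : 3 ≤ d2) (h23 : d2 ≤ d3)
    (hdvd : ¬ 3 ∣ d2) (hmem : ¬ ∃ a b : ℕ, d3 = 3 * a + b * d2) :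
    ¬ ∃ (e : Fin 3 → ℕ) (σ : Equiv.Perm (Fin 3)) (n s : ℕ),
      e = ![3, d2, d3] ∘ σ ∧ 0 < n ∧ e 0 = 2 * n ∧ e 1 = n * s ∧ Odd s ∧ 3 ≤ s ∧
        2 * n < e 2 ∧ e 2 ≤ n * s :=
  no_type_I_pattern_general d2 d3 h2 h23
end

section
/- Let d2, d3 be integers with 3 ≤ d2 ≤ d3 such that 3 does not divide d2 and d3 cannot be written as 3a + b·d2 with natural numbers a, b. Then there do not exist a permutation (e₁,e₂,e₃) of (3,d2,d3) and a positive integer n such that e₁ = 2n and either (e₂ = 3n and n < e₃ ≤ (3/2)·n) or ((5/2)·n < e₂ ≤ 3n and e₃ = (3/2)·n). -/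
/-!
In the pattern the entry `e₁ = 2n` is even and `e₃ < e₁ < e₂`, so the entry `3` of `(3, d2, d3)`
can only be `e₃`; this forces `n = 2` and `(e₁, e₂, e₃) = (4, 6, 3)`. Hence `{d2, d3} = {4, 6}`,
so `d3 = 6 = 3 · 2` lies in `3ℕ + d2ℕ`.
-/

def IsTypeIIIOrIVPattern (e : Fin 3 → ℕ) (n : ℕ) : Prop :=
  0 < n ∧ e 0 = 2 * n ∧
    ((e 1 = 3 * n ∧ n < e 2 ∧ 2 * e 2 ≤ 3 * n) ∨
      (5 * n < 2 * e 1 ∧ e 1 ≤ 3 * n ∧ 2 * e 2 = 3 * n))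

theorem IsTypeIIIOrIVPattern.eq_of_three_mem_range {e : Fin 3 → ℕ} {n : ℕ}
    (h : IsTypeIIIOrIVPattern e n) (h3 : 3 ∈ Set.range e) : e = ![4, 6, 3] := by
  obtain ⟨hn, h0, hcase⟩ := h
  obtain ⟨i, hi⟩ := h3
  have he2 : e 2 = 3 := by
    fin_cases i <;> simp only [Fin.zero_eta, Fin.mk_one, Fin.reduceFinMk] at hi <;> omega
  ext j
  fin_cases j <;>
    simp only [Fin.zero_eta, Fin.mk_one, Fin.reduceFinMk, Fin.isValue, Matrix.cons_val_zero,
      Matrix.cons_val_one, Matrix.cons_val] <;> omega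

theorem no_type_III_IV_pattern_general (d2 d3 : ℕ) (h23 : d2 ≤ d3)
    (hmem : ¬ ∃ a b : ℕ, d3 = 3 * a + b * d2) :
    ¬ ∃ (e : Fin 3 → ℕ) (σ : Equiv.Perm (Fin 3)) (n : ℕ),
      e = ![3, d2, d3] ∘ σ ∧ 0 < n ∧ e 0 = 2 * n ∧
        ((e 1 = 3 * n ∧ n < e 2 ∧ 2 * e 2 ≤ 3 * n) ∨
          (5 * n < 2 * e 1 ∧ e 1 ≤ 3 * n ∧ 2 * e 2 = 3 * n)) := by
  rintro ⟨e, σ, n, he, hpat⟩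
  have hrange : Set.range e = Set.range ![3, d2, d3] := he ▸ EquivLike.range_comp _ σ
  have he_eq : e = ![4, 6, 3] :=
    IsTypeIIIOrIVPattern.eq_of_three_mem_range hpat (hrange ▸ ⟨0, rfl⟩)
  have h6 : (6 : ℕ) ∈ Set.range ![3, d2, d3] := hrange ▸ ⟨1, by simp [he_eq]⟩
  have hd3 : d3 ∈ Set.range ![4, 6, 3] := he_eq ▸ hrange ▸ ⟨2, rfl⟩
  simp only [Nat.succ_eq_add_one, Nat.reduceAdd, Matrix.range_cons, Matrix.range_empty,
    Set.union_empty, Set.union_singleton, Set.union_insert, Set.mem_insert_iff,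
    Set.mem_singleton_iff, Nat.reduceEqDiff, or_false] at h6 hd3
  exact hmem ⟨2, 0, by omega⟩

/-- Suppose `3 ≤ d2 ≤ d3`, `3 ∤ d2` and `d3 ∉ 3ℕ + d2ℕ`. Then no permutation `(e₁, e₂, e₃)` of
`(3, d2, d3)` fits the degree pattern of a Shestakov–Umirbaev reduction of type III or IV:
`e₁ = 2n` and either `e₂ = 3n` with `n < e₃ ≤ (3/2)·n`, or `(5/2)·n < e₂ ≤ 3n` with
`e₃ = (3/2)·n`. -/
theorem no_type_III_IV_pattern (d2 d3 : ℕ) (h2 : 3 ≤ d2) (h23 : d2 ≤ d3)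
    (hdvd : ¬ 3 ∣ d2) (hmem : ¬ ∃ a b : ℕ, d3 = 3 * a + b * d2) :
    ¬ ∃ (e : Fin 3 → ℕ) (σ : Equiv.Perm (Fin 3)) (n : ℕ),
      e = ![3, d2, d3] ∘ σ ∧ 0 < n ∧ e 0 = 2 * n ∧
        ((e 1 = 3 * n ∧ n < e 2 ∧ 2 * e 2 ≤ 3 * n) ∨
          (5 * n < 2 * e 1 ∧ e 1 ≤ 3 * n ∧ 2 * e 2 = 3 * n)) :=
  no_type_III_IV_pattern_general d2 d3 h23 hmem
end
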